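/- arXiv:1906.02584 — 4 statements merged into one kernel-verified Lean document; each statement's English description precedes it below -/
import Mathlib

section
/- Let F : ℝⁿ × ℝᵐ → ℝᵐ be continuously differentiable, and suppose F(x₀,y₀) = 0 and the partial derivative D_y F(x₀,y₀) is invertible. Let g : U → ℝᵐ (U a sufficiently small neighborhood of x₀) be smooth with F(x, g(x)) = 0 for all x ∈ U and g(x₀)=y₀. If (x(t), y(t)) is a smooth curve with (x(0), y(0)) = (x₀, y₀) and F(x(t), y(t)) = O(t^r) as t → 0 for some integer r ≥ 1, then y(t) − g(x(t)) = O(t^r). -/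
open Topology

open Set

variable {E : Type*} [NormedAddCommGroup E] [NormedSpace ℝ E]

example (F : ℝ → ℝ) (h : ContDiff ℝ (⊤ : ℕ∞) F) : True := by
  have := @h
  trivial

private lemma iterDW_open {f : ℝ → E} {O : Set ℝ} (hO : IsOpen O) (n : ℕ) {x : ℝ}
    (hx : x ∈ O) : iteratedDerivWithin n f O x = iteratedDeriv n f x := by
  rw [iteratedDerivWithin_eq_iteratedFDerivWithin, iteratedDeriv_eq_iteratedFDeriv,
    iteratedFDerivWithin_of_isOpen n hO hx]

private lemma iterDW_eq {f : ℝ → E} {O s : Set ℝ} (hO : IsOpen O)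
    (hf : ContDiffOn ℝ (⊤ : ℕ∞) f O) (hs : UniqueDiffOn ℝ s) (hsO : s ⊆ O) :
    ∀ (n : ℕ), ∀ x ∈ s, iteratedDerivWithin n f s x = iteratedDeriv n f x := by
  intro n
  induction n with
  | zero => intro x hx; simp
  | succ n ih =>
    intro x hx
    have heq : Set.EqOn (iteratedDerivWithin n f s) (iteratedDeriv n f) s := fun z hz => ih z hz
    have hOn : Set.EqOn (iteratedDerivWithin n f O) (iteratedDeriv n f) O :=
      fun z hz => iterDW_open hO n hz
    have hdO : DifferentiableOn ℝ (iteratedDerivWithin n f O) O :=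
      hf.differentiableOn_iteratedDerivWithin (by exact_mod_cast lt_top_iff_ne_top.2 (by simp))
        hO.uniqueDiffOn
    have hdiff : DifferentiableAt ℝ (iteratedDeriv n f) x := by
      have h1 : DifferentiableAt ℝ (iteratedDerivWithin n f O) x :=
        (hdO x (hsO hx)).differentiableAt (hO.mem_nhds (hsO hx))
      have h2 : iteratedDerivWithin n f O =ᶠ[𝓝 x] iteratedDeriv n f := by
        filter_upwards [hO.mem_nhds (hsO hx)] with z hz using hOn hz
      exact h2.symm.differentiableAt_iff.mpr h1
    rw [iteratedDerivWithin_succ, derivWithin_congr heq (ih x hx),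
      hdiff.derivWithin (hs x hx), ← iteratedDeriv_succ]

open Nat in
private lemma taylor_bound_right {f : ℝ → E} {δ : ℝ} (hδ : 0 < δ)
    (hf : ContDiffOn ℝ (⊤ : ℕ∞) f (Ioo (-δ) δ)) (k : ℕ) :
    ∃ C : ℝ, ∀ t ∈ Icc (0:ℝ) (δ/2),
      ‖f t - ∑ j ∈ Finset.range (k+1), ((t ^ j / (j ! : ℝ)) • iteratedDeriv j f 0)‖
        ≤ C * t ^ (k+1) := by
  have h2 : (0:ℝ) < δ/2 := by positivity
  have hsub : Icc (0:ℝ) (δ/2) ⊆ Ioo (-δ) δ := fun z hz => ⟨by linarith [hz.1], by linarith [hz.2]⟩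
  obtain ⟨C, hC⟩ := exists_taylor_mean_remainder_bound (n := k) h2.le
    ((hf.mono hsub).of_le (by exact_mod_cast le_top))
  refine ⟨C, fun t ht => ?_⟩
  have h := hC t ht
  rw [taylor_within_apply] at h
  have hconv : ∀ j, iteratedDerivWithin j f (Icc 0 (δ/2)) 0 = iteratedDeriv j f 0 :=
    fun j => iterDW_eq isOpen_Ioo hf (uniqueDiffOn_Icc h2) hsub j 0 (left_mem_Icc.2 h2.le)
  simp only [hconv, sub_zero] at h
  simpa [div_eq_mul_inv, mul_comm] using h

open Nat in
private lemma taylor_bound {f : ℝ → E} {δ : ℝ} (hδ : 0 < δ)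
    (hf : ContDiffOn ℝ (⊤ : ℕ∞) f (Ioo (-δ) δ)) (k : ℕ) :
    ∃ C : ℝ, ∀ t : ℝ, |t| ≤ δ/2 →
      ‖f t - ∑ j ∈ Finset.range (k+1), ((t ^ j / (j ! : ℝ)) • iteratedDeriv j f 0)‖
        ≤ C * |t| ^ (k+1) := by
  obtain ⟨C₁, h₁⟩ := taylor_bound_right hδ hf k
  have hneg : ContDiffOn ℝ (⊤ : ℕ∞) (fun s => f (-s)) (Ioo (-δ) δ) := by
    refine ContDiffOn.comp hf contDiff_neg.contDiffOn ?_
    intro z hz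
    exact ⟨by simpa using neg_lt_neg hz.2, by simpa using neg_lt_neg hz.1⟩
  obtain ⟨C₂, h₂⟩ := taylor_bound_right hδ hneg k
  refine ⟨max C₁ C₂, fun t ht => ?_⟩
  rcases le_or_gt 0 t with htn | htn
  · have habs : |t| = t := abs_of_nonneg htn
    calc ‖f t - ∑ j ∈ Finset.range (k+1), ((t ^ j / (j ! : ℝ)) • iteratedDeriv j f 0)‖
        ≤ C₁ * t ^ (k+1) := h₁ t ⟨htn, by rwa [habs] at ht⟩
      _ ≤ max C₁ C₂ * |t| ^ (k+1) := by
          rw [habs]; exact mul_le_mul_of_nonneg_right (le_max_left _ _) (by positivity)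
  · have habs : |t| = -t := abs_of_neg htn
    have hmem : -t ∈ Icc (0:ℝ) (δ/2) := ⟨by linarith, by rwa [habs] at ht⟩
    have h := h₂ (-t) hmem
    have hterm : ∀ j, ((-t) ^ j / (j ! : ℝ)) • iteratedDeriv j (fun s => f (-s)) 0
        = (t ^ j / (j ! : ℝ)) • iteratedDeriv j f 0 := by
      intro j
      rw [iteratedDeriv_comp_neg, neg_zero, smul_smul]
      congr 1
      rw [div_mul_eq_mul_div, ← mul_pow]
      norm_num
    simp only [hterm, neg_neg] at h
    calc ‖f t - ∑ j ∈ Finset.range (k+1), ((t ^ j / (j ! : ℝ)) • iteratedDeriv j f 0)‖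
        ≤ C₂ * (-t) ^ (k+1) := h
      _ ≤ max C₁ C₂ * |t| ^ (k+1) := by
          rw [habs]; exact mul_le_mul_of_nonneg_right (le_max_right _ _) (pow_nonneg (by linarith) _)

open Nat in
private lemma bound_of_vanish {f : ℝ → E} {δ : ℝ} (hδ : 0 < δ)
    (hf : ContDiffOn ℝ (⊤ : ℕ∞) f (Ioo (-δ) δ)) (r : ℕ) (hr : 1 ≤ r)
    (hv : ∀ k < r, iteratedDeriv k f 0 = 0) :
    ∃ C : ℝ, ∀ t : ℝ, |t| ≤ δ/2 → ‖f t‖ ≤ C * |t| ^ r := by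
  obtain ⟨C, hC⟩ := taylor_bound hδ hf (r-1)
  have hrr : r - 1 + 1 = r := by omega
  refine ⟨C, fun t ht => ?_⟩
  have h := hC t ht
  have hsum : (∑ j ∈ Finset.range (r-1+1), ((t ^ j / (j ! : ℝ)) • iteratedDeriv j f 0)) = 0 :=
    Finset.sum_eq_zero fun j hj => by
      rw [hv j (by have := Finset.mem_range.mp hj; omega), smul_zero]
  rw [hsum, sub_zero, hrr] at h
  exact h

open Nat in
private lemma vanish_of_bound {f : ℝ → E} {δ : ℝ} (hδ : 0 < δ)
    (hf : ContDiffOn ℝ (⊤ : ℕ∞) f (Ioo (-δ) δ)) (r : ℕ) (C : ℝ)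
    (hb : ∀ t : ℝ, |t| ≤ δ/2 → ‖f t‖ ≤ C * |t| ^ r) :
    ∀ k < r, iteratedDeriv k f 0 = 0 := by
  intro k
  induction k using Nat.strong_induction_on with
  | _ k ih =>
    intro hk
    obtain ⟨C', hC'⟩ := taylor_bound hδ hf k
    have hvanish : ∀ j < k, iteratedDeriv j f 0 = 0 := fun j hj => ih j hj (hj.trans hk)
    set d := iteratedDeriv k f 0 with hd
    have hkfac : (0:ℝ) < (k ! : ℝ) := by exact_mod_cast k.factorial_pos
    have hsum : ∀ t : ℝ, (∑ j ∈ Finset.range (k+1), ((t ^ j / (j ! : ℝ)) • iteratedDeriv j f 0))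
        = (t ^ k / (k ! : ℝ)) • d := by
      intro t
      rw [Finset.sum_eq_single_of_mem k (Finset.self_mem_range_succ k)]
      intro j hj hjk
      rw [hvanish j (by have := Finset.mem_range.mp hj; omega), smul_zero]
    set a : ℝ := min (δ/2) 1 with ha
    have ha0 : 0 < a := lt_min (by positivity) one_pos
    set M : ℝ := (|C| + |C'|) * (k ! : ℝ) with hM
    have key : ∀ t ∈ Ioc (0:ℝ) a, ‖d‖ ≤ M * t := by
      intro t ht
      have ht0 : 0 < t := ht.1
      have ht1 : t ≤ 1 := ht.2.trans (min_le_right _ _)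
      have htδ : |t| ≤ δ/2 := by
        rw [abs_of_pos ht0]; exact ht.2.trans (min_le_left _ _)
      have h1 : ‖(t ^ k / (k ! : ℝ)) • d‖ ≤ (|C| + |C'|) * t ^ (k+1) := by
        have htr : ‖(t ^ k / (k ! : ℝ)) • d‖ ≤ ‖f t‖ + ‖f t - (t ^ k / (k ! : ℝ)) • d‖ := by
          have := norm_sub_le (f t) (f t - (t ^ k / (k ! : ℝ)) • d)
          simpa using this
        have h2 := hC' t htδ
        rw [hsum] at h2
        have h3 := hb t htδ
        have habs : |t| = t := abs_of_pos ht0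
        rw [habs] at h2 h3
        have hpow : t ^ r ≤ t ^ (k+1) :=
          pow_le_pow_of_le_one ht0.le ht1 (by omega)
        have hCr : C * t ^ r ≤ |C| * t ^ (k+1) := by
          calc C * t ^ r ≤ |C| * t ^ r :=
                mul_le_mul_of_nonneg_right (le_abs_self C) (by positivity)
            _ ≤ |C| * t ^ (k+1) := mul_le_mul_of_nonneg_left hpow (abs_nonneg C)
        have hC'r : C' * t ^ (k+1) ≤ |C'| * t ^ (k+1) :=
          mul_le_mul_of_nonneg_right (le_abs_self C') (by positivity)
        calc ‖(t ^ k / (k ! : ℝ)) • d‖ ≤ ‖f t‖ + ‖f t - (t ^ k / (k ! : ℝ)) • d‖ := htr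
          _ ≤ C * t ^ r + C' * t ^ (k+1) := add_le_add h3 h2
          _ ≤ |C| * t ^ (k+1) + |C'| * t ^ (k+1) := add_le_add hCr hC'r
          _ = (|C| + |C'|) * t ^ (k+1) := by ring
      rw [norm_smul, Real.norm_eq_abs, abs_of_pos (by positivity : (0:ℝ) < t ^ k / (k ! : ℝ)),
        div_mul_eq_mul_div, div_le_iff₀ hkfac] at h1
      have h4 : t ^ k * ‖d‖ ≤ t ^ k * (M * t) := by
        calc t ^ k * ‖d‖ ≤ (|C| + |C'|) * t ^ (k+1) * (k ! : ℝ) := h1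
          _ = t ^ k * (M * t) := by rw [hM, pow_succ]; ring
      exact le_of_mul_le_mul_left h4 (pow_pos ht0 k)
    have hle : ‖d‖ ≤ 0 := by
      have htend : Filter.Tendsto (fun t : ℝ => M * t) (𝓝[>] (0:ℝ)) (𝓝 0) := by
        have : Filter.Tendsto (fun t : ℝ => M * t) (𝓝 (0:ℝ)) (𝓝 (M * 0)) :=
          (continuous_const.mul continuous_id).tendsto 0
        rw [mul_zero] at this
        exact this.mono_left nhdsWithin_le_nhds
      refine ge_of_tendsto htend ?_
      filter_upwards [Ioc_mem_nhdsGT_of_mem ⟨le_refl (0:ℝ), ha0⟩] with t ht using key t ht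
    exact norm_eq_zero.mp (le_antisymm hle (norm_nonneg d))

/-- Implicit-function-theorem version for curves tangent to high order
(Proposition on `O(t^r)`): if `F(x₀,y₀) = 0`, `D_y F(x₀,y₀)` is invertible,
`g` solves `F(x, g(x)) = 0` near `x₀` with `g(x₀) = y₀`, and a smooth curve
`(x(t), y(t))` through `(x₀,y₀)` satisfies `F(x(t),y(t)) = O(t^r)` (all
derivatives at `0` of order `< r` vanish), then `y(t) − g(x(t)) = O(t^r)`. -/
theorem stmt_0 (n m r : ℕ) (hr : 1 ≤ r)
    (F : (Fin n → ℝ) × (Fin m → ℝ) → Fin m → ℝ) (hF : ContDiff ℝ (⊤ : ℕ∞) F)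
    (x₀ : Fin n → ℝ) (y₀ : Fin m → ℝ) (hF0 : F (x₀, y₀) = 0)
    (hinv : Function.Bijective fun v : Fin m → ℝ => fderiv ℝ F (x₀, y₀) (0, v))
    (U : Set (Fin n → ℝ)) (hU : U ∈ 𝓝 x₀)
    (g : (Fin n → ℝ) → Fin m → ℝ) (hg : ContDiffOn ℝ (⊤ : ℕ∞) g U)
    (hg0 : g x₀ = y₀) (hFg : ∀ x ∈ U, F (x, g x) = 0)
    (x : ℝ → Fin n → ℝ) (y : ℝ → Fin m → ℝ)
    (hx : ContDiff ℝ (⊤ : ℕ∞) x) (hy : ContDiff ℝ (⊤ : ℕ∞) y)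
    (hx0 : x 0 = x₀) (hy0 : y 0 = y₀)
    (hO : ∀ k < r, iteratedDeriv k (fun t => F (x t, y t)) 0 = 0) :
    ∀ k < r, iteratedDeriv k (fun t => y t - g (x t)) 0 = 0 := by
  classical
  have hφ : ContDiff ℝ (⊤ : ℕ∞) (fun t => F (x t, y t)) := hF.comp (hx.prodMk hy)
  set Φ : ((Fin n → ℝ) × (Fin m → ℝ)) → ((Fin n → ℝ) × (Fin m → ℝ)) :=
    fun p => (p.1, F p) with hΦdef
  set L := fderiv ℝ F (x₀, y₀) with hLdef
  have hFd : Differentiable ℝ F := hF.differentiable (by simp)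
  set D := (ContinuousLinearMap.fst ℝ (Fin n → ℝ) (Fin m → ℝ)).prod L with hDdef
  have hDΦ : HasFDerivAt Φ D (x₀, y₀) := hasFDerivAt_fst.prodMk (hFd (x₀, y₀)).hasFDerivAt
  have hbij : Function.Bijective ⇑D := by
    constructor
    · rintro ⟨a₁, a₂⟩ ⟨b₁, b₂⟩ hab
      simp only [hDdef, ContinuousLinearMap.prod_apply, ContinuousLinearMap.coe_fst',
        Prod.mk.injEq] at hab
      obtain ⟨h1, h2⟩ := hab
      have h3 : L ((0 : Fin n → ℝ), a₂ - b₂) = 0 := by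
        have hdiffp : (((0 : Fin n → ℝ), a₂ - b₂) : (Fin n → ℝ) × (Fin m → ℝ))
            = ((a₁, a₂) : (Fin n → ℝ) × (Fin m → ℝ)) - (b₁, b₂) := by
          rw [Prod.mk_sub_mk, h1, sub_self]
        rw [hdiffp, map_sub, h2, sub_self]
      have h4 : a₂ - b₂ = 0 := by
        apply hinv.injective
        show L (0, a₂ - b₂) = L (0, 0)
        rw [h3]
        have h00 : (((0 : Fin n → ℝ), (0 : Fin m → ℝ)) : (Fin n → ℝ) × (Fin m → ℝ))
            = (0 : (Fin n → ℝ) × (Fin m → ℝ)) := rfl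
        rw [h00, map_zero]
      exact Prod.ext h1 (sub_eq_zero.mp h4)
    · rintro ⟨a, b⟩
      obtain ⟨v, hv⟩ := hinv.surjective (b - L (a, (0 : Fin m → ℝ)))
      refine ⟨(a, v), ?_⟩
      simp only [hDdef, ContinuousLinearMap.prod_apply, ContinuousLinearMap.coe_fst',
        Prod.mk.injEq]
      refine ⟨by trivial, ?_⟩
      have hsplit : (((a, v)) : (Fin n → ℝ) × (Fin m → ℝ)) = (a, 0) + (0, v) := by
        rw [Prod.mk_add_mk, add_zero, zero_add]
      simp only at hv
      rw [hsplit, map_add, hv]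
      abel
  let e : ((Fin n → ℝ) × (Fin m → ℝ)) ≃L[ℝ] ((Fin n → ℝ) × (Fin m → ℝ)) :=
    LinearEquiv.toContinuousLinearEquiv (LinearEquiv.ofBijective
      (D : ((Fin n → ℝ) × (Fin m → ℝ)) →ₗ[ℝ] ((Fin n → ℝ) × (Fin m → ℝ))) hbij)
  have hecoe : (e : ((Fin n → ℝ) × (Fin m → ℝ)) →L[ℝ] ((Fin n → ℝ) × (Fin m → ℝ))) = D :=
    ContinuousLinearMap.ext fun p => rfl
  have hΦc : ContDiff ℝ (⊤ : ℕ∞) Φ := contDiff_fst.prodMk hF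
  have hΦat : ContDiffAt ℝ (⊤ : ℕ∞) Φ (x₀, y₀) := hΦc.contDiffAt
  have hDΦ' : HasFDerivAt Φ (e : ((Fin n → ℝ) × (Fin m → ℝ)) →L[ℝ]
      ((Fin n → ℝ) × (Fin m → ℝ))) (x₀, y₀) := by rw [hecoe]; exact hDΦ
  have h1T : (1 : WithTop ℕ∞) ≤ ⊤ := le_top
  set Ψ := hΦat.localInverse hDΦ' (by simp) with hΨdef
  have hΨat : ContDiffAt ℝ (⊤ : ℕ∞) Ψ (Φ (x₀, y₀)) := hΦat.to_localInverse hDΦ' (by simp)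
  obtain ⟨K, T, hT, hK⟩ := (hΨat.of_le (by exact_mod_cast le_top)).exists_lipschitzOnWith
  have hstrict := hΦat.hasStrictFDerivAt' hDΦ' (by simp)
  have hlinv : ∀ᶠ p in 𝓝 (x₀, y₀), Ψ (Φ p) = p := hstrict.eventually_left_inverse
  have hxc : Filter.Tendsto x (𝓝 0) (𝓝 x₀) := by
    have := hx.continuous.tendsto 0; rwa [hx0] at this
  have hyc : Filter.Tendsto y (𝓝 0) (𝓝 y₀) := by
    have := hy.continuous.tendsto 0; rwa [hy0] at this
  have hcurve : Filter.Tendsto (fun t => (x t, y t)) (𝓝 0) (𝓝 (x₀, y₀)) :=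
    hxc.prodMk_nhds hyc
  have hgc : ContinuousAt g x₀ := hg.continuousOn.continuousAt hU
  have hgxc : Filter.Tendsto (fun t => g (x t)) (𝓝 0) (𝓝 y₀) := by
    have := hgc.tendsto.comp hxc; rwa [hg0] at this
  have hgraph : Filter.Tendsto (fun t => (x t, g (x t))) (𝓝 0) (𝓝 (x₀, y₀)) :=
    hxc.prodMk_nhds hgxc
  have hΦcont : Continuous Φ := hΦc.continuous
  have hcurveΦ : Filter.Tendsto (fun t => Φ (x t, y t)) (𝓝 0) (𝓝 (Φ (x₀, y₀))) :=
    (hΦcont.tendsto (x₀, y₀)).comp hcurve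
  have hgraphΦ : Filter.Tendsto (fun t => Φ (x t, g (x t))) (𝓝 0) (𝓝 (Φ (x₀, y₀))) :=
    (hΦcont.tendsto (x₀, y₀)).comp hgraph
  have hE1 : ∀ᶠ t in 𝓝 (0:ℝ), Ψ (Φ (x t, y t)) = (x t, y t) := hcurve.eventually hlinv
  have hE2 : ∀ᶠ t in 𝓝 (0:ℝ), Ψ (Φ (x t, g (x t))) = (x t, g (x t)) := hgraph.eventually hlinv
  have hE3 : ∀ᶠ t in 𝓝 (0:ℝ), Φ (x t, y t) ∈ T := hcurveΦ hT
  have hE4 : ∀ᶠ t in 𝓝 (0:ℝ), Φ (x t, g (x t)) ∈ T := hgraphΦ hT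
  have hE5 : ∀ᶠ t in 𝓝 (0:ℝ), x t ∈ U := hxc hU
  have hEw : ∀ᶠ t in 𝓝 (0:ℝ), ‖y t - g (x t)‖ ≤ (K : ℝ) * ‖F (x t, y t)‖ := by
    filter_upwards [hE1, hE2, hE3, hE4, hE5] with t h1 h2 h3 h4 h5
    have hΦg : Φ (x t, g (x t)) = (x t, 0) := by
      simp only [hΦdef, hFg (x t) h5]
    have hd2 : dist ((x t, y t) : (Fin n → ℝ) × (Fin m → ℝ)) ((x t, g (x t)))
        ≤ (K : ℝ) * dist (Φ (x t, y t)) (Φ (x t, g (x t))) := by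
      have := hK.dist_le_mul _ h3 _ h4
      rwa [h1, h2] at this
    have hd1 : dist (y t) (g (x t)) ≤
        dist ((x t, y t) : (Fin n → ℝ) × (Fin m → ℝ)) ((x t, g (x t))) := by
      rw [Prod.dist_eq]; exact le_max_right _ _
    have hd3 : dist (Φ (x t, y t)) (Φ (x t, g (x t))) = ‖F (x t, y t)‖ := by
      rw [hΦg]
      show dist (((x t, F (x t, y t))) : (Fin n → ℝ) × (Fin m → ℝ)) ((x t, 0)) = _
      rw [Prod.dist_eq, dist_self, dist_eq_norm, sub_zero]
      exact max_eq_right (norm_nonneg _)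
    calc ‖y t - g (x t)‖ = dist (y t) (g (x t)) := (dist_eq_norm _ _).symm
      _ ≤ dist ((x t, y t) : (Fin n → ℝ) × (Fin m → ℝ)) ((x t, g (x t))) := hd1
      _ ≤ (K : ℝ) * dist (Φ (x t, y t)) (Φ (x t, g (x t))) := hd2
      _ = (K : ℝ) * ‖F (x t, y t)‖ := by rw [hd3]
  obtain ⟨C, hC⟩ := bound_of_vanish (by norm_num : (0:ℝ) < 2)
    (hφ.contDiffOn : ContDiffOn ℝ (⊤ : ℕ∞) (fun t => F (x t, y t)) (Ioo (-(2:ℝ)) 2)) r hr hO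
  set V := x ⁻¹' (interior U) with hVdef
  have hVopen : IsOpen V := isOpen_interior.preimage hx.continuous
  have hV0 : (0:ℝ) ∈ V := by
    simp only [hVdef, Set.mem_preimage, hx0]
    exact mem_interior_iff_mem_nhds.mpr hU
  have hgx : ContDiffOn ℝ (⊤ : ℕ∞) (fun t => g (x t)) V :=
    ContDiffOn.comp (hg.mono interior_subset) hx.contDiffOn (fun t ht => ht)
  have hw : ContDiffOn ℝ (⊤ : ℕ∞) (fun t => y t - g (x t)) V := hy.contDiffOn.sub hgx
  have hev : ∀ᶠ t in 𝓝 (0:ℝ), (‖y t - g (x t)‖ ≤ ((K : ℝ) * C) * |t| ^ r) ∧ t ∈ V := by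
    have hsmall : ∀ᶠ t in 𝓝 (0:ℝ), |t| ≤ 1 := by
      filter_upwards [Metric.ball_mem_nhds (0:ℝ) one_pos] with t ht
      rw [Metric.mem_ball, Real.dist_eq, sub_zero] at ht
      exact ht.le
    have hbound : ∀ᶠ t in 𝓝 (0:ℝ), ‖F (x t, y t)‖ ≤ C * |t| ^ r := by
      filter_upwards [hsmall] with t ht
      have := hC t (by rw [show (2:ℝ)/2 = 1 by norm_num]; exact ht)
      exact this
    filter_upwards [hEw, hbound, hVopen.mem_nhds hV0] with t h1 h2 h3
    refine ⟨?_, h3⟩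
    calc ‖y t - g (x t)‖ ≤ (K : ℝ) * ‖F (x t, y t)‖ := h1
      _ ≤ (K : ℝ) * (C * |t| ^ r) := mul_le_mul_of_nonneg_left h2 K.coe_nonneg
      _ = ((K : ℝ) * C) * |t| ^ r := by ring
  obtain ⟨ε, hε, hball⟩ := Metric.eventually_nhds_iff.mp hev
  have hIoo : Ioo (-ε) ε ⊆ V := by
    intro z hz
    have : dist z 0 < ε := by rw [Real.dist_eq, sub_zero, abs_lt]; exact ⟨hz.1, hz.2⟩
    exact (hball this).2
  refine fun k hk => vanish_of_bound hε (hw.mono hIoo) r ((K : ℝ) * C) ?_ k hk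
  intro t ht
  have hdist : dist t 0 < ε := by
    rw [Real.dist_eq, sub_zero]
    calc |t| ≤ ε / 2 := ht
      _ < ε := by linarith
  exact (hball hdist).1
end

section
/- Let H(z,w) = (z², √2·zw, w²) and let a ∈ ℂ. Then the vector field V(z,w) = (a·w, −conj(a)·z³/√2, −conj(a)·z²·w) along H satisfies Re⟨V(z,w), H(z,w)⟩ = 0 for all (z,w) with |z|²+|w|² = 1, i.e., V is an infinitesimal deformation of the sphere map H : S³ → S⁵. -/
open ComplexConjugate

/-! With `u = a·w·z̄²`, the pairing `⟨V, H⟩` equals `u − ū·(|z|² + |w|²)`, which on the sphere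
is `u − ū`, a purely imaginary number. -/

lemma pairing_eq_sub_conj_mul_normSq (a z w : ℂ) :
    (a * w) * conj (z ^ 2)
        + (-(conj a) * z ^ 3 / (Real.sqrt 2 : ℂ)) * conj ((Real.sqrt 2 : ℂ) * z * w)
        + (-(conj a) * z ^ 2 * w) * conj (w ^ 2)
      = a * w * conj z ^ 2 - conj (a * w * conj z ^ 2) * (z * conj z + w * conj w) := by
  have hsqrt2 : (Real.sqrt 2 : ℂ) ≠ 0 := by exact_mod_cast (Real.sqrt_pos.2 two_pos).ne'
  simp only [map_mul, map_pow, Complex.conj_conj, Complex.conj_ofReal]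
  field_simp
  ring

/-- For `H(z,w) = (z², √2·zw, w²)` and `a ∈ ℂ`, the vector field
`V(z,w) = (a·w, −conj(a)·z³/√2, −conj(a)·z²·w)` along `H` satisfies
`Re⟨V, H⟩ = 0` on the sphere `|z|² + |w|² = 1`, i.e. `V` is an infinitesimal
deformation of the sphere map `H : S³ → S⁵`. -/
theorem stmt_9 :
    ∀ (a : ℂ) (z w : ℂ), ‖z‖ ^ 2 + ‖w‖ ^ 2 = 1 →
      ((a * w) * conj (z ^ 2)
        + (-(conj a) * z ^ 3 / (Real.sqrt 2 : ℂ)) * conj ((Real.sqrt 2 : ℂ) * z * w)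
        + (-(conj a) * z ^ 2 * w) * conj (w ^ 2)).re = 0 := by
  intro a z w hsphere
  have hsphere' : z * conj z + w * conj w = 1 := by
    rw [Complex.mul_conj, Complex.mul_conj, Complex.normSq_eq_norm_sq,
      Complex.normSq_eq_norm_sq]
    exact_mod_cast hsphere
  rw [pairing_eq_sub_conj_mul_normSq, hsphere', mul_one, Complex.sub_re, Complex.conj_re,
    sub_self]
end

section
/- Let H(z,w) = (z², √2·zw, w²) and γ ∈ ℂ. The pushforward of the sphere vector field S₂(z,w) = (−conj(γ)·w, γ·z) by H equals the restriction along H of the linear vector field V'(z₁,z₂,z₃) = (−√2·conj(γ)·z₂, √2·γ·z₁ − √2·conj(γ)·z₃, √2·γ·z₂) on ℂ³; that is, DH(z,w)·S₂(z,w) = V'(H(z,w)) for all (z,w) ∈ ℂ². Moreover V' is an infinitesimal automorphism of S⁵, i.e., Re⟨V'(Z), Z⟩ = 0 for all Z ∈ ℂ³. -/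
/-!
Differentiating `H(z,w) = (z², c·zw, w²)` term by term gives the pushforward explicitly; with
`c² = 2` it matches `V'(H(z,w))` coefficient by coefficient. The matrix of `V'` is
skew-Hermitian, so `⟨V'Z, Z⟩` is a sum of terms `x - conj x` and has real part zero.
-/

open ComplexConjugate

theorem fderiv_veronese_apply {𝕜 : Type*} [NontriviallyNormedField 𝕜] (c : 𝕜) (p v : 𝕜 × 𝕜) :
    fderiv 𝕜 (fun p : 𝕜 × 𝕜 => (p.1 ^ 2, c * p.1 * p.2, p.2 ^ 2)) p v
      = (2 * p.1 * v.1, c * (p.1 * v.2 + v.1 * p.2), 2 * p.2 * v.2) := by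
  have hfst : HasFDerivAt (fun q : 𝕜 × 𝕜 => q.1) (ContinuousLinearMap.fst 𝕜 𝕜 𝕜) p :=
    hasFDerivAt_fst
  have hsnd : HasFDerivAt (fun q : 𝕜 × 𝕜 => q.2) (ContinuousLinearMap.snd 𝕜 𝕜 𝕜) p :=
    hasFDerivAt_snd
  have hH : HasFDerivAt (fun p : 𝕜 × 𝕜 => (p.1 ^ 2, c * p.1 * p.2, p.2 ^ 2)) _ p :=
    (hfst.pow 2).prodMk (((hfst.const_mul c).mul hsnd).prodMk (hsnd.pow 2))
  rw [hH.fderiv]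
  ext
  · simp
  · simp
    ring
  · simp

theorem re_skewHermitian_inner_eq_zero (c : ℝ) (γ : ℂ) (Z : ℂ × ℂ × ℂ) :
    ((-(c : ℂ) * conj γ * Z.2.1) * conj Z.1
        + ((c : ℂ) * γ * Z.1 - (c : ℂ) * conj γ * Z.2.2) * conj Z.2.1
        + ((c : ℂ) * γ * Z.2.1) * conj Z.2.2).re = 0 := by
  simp only [Complex.add_re, Complex.sub_re, Complex.sub_im, Complex.mul_re, Complex.mul_im,
    Complex.neg_re, Complex.neg_im, Complex.conj_re, Complex.conj_im, Complex.ofReal_re,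
    Complex.ofReal_im]
  ring

/-- For `H(z,w) = (z², √2·zw, w²)` and `γ ∈ ℂ`, the pushforward of the sphere
vector field `S₂(z,w) = (−conj(γ)·w, γ·z)` by `H` equals the restriction along
`H` of the linear vector field
`V'(z₁,z₂,z₃) = (−√2·conj(γ)·z₂, √2·γ·z₁ − √2·conj(γ)·z₃, √2·γ·z₂)`, i.e.
`DH(z,w)·S₂(z,w) = V'(H(z,w))`; moreover `V'` is an infinitesimal automorphism
of `S⁵`: `Re⟨V'(Z), Z⟩ = 0` for all `Z ∈ ℂ³`. -/
theorem stmt_11 (γ : ℂ) :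
    (∀ z w : ℂ,
      fderiv ℂ (fun p : ℂ × ℂ => (p.1 ^ 2, (Real.sqrt 2 : ℂ) * p.1 * p.2, p.2 ^ 2))
          (z, w) (-(conj γ) * w, γ * z)
        = (fun Z : ℂ × ℂ × ℂ =>
            (-(Real.sqrt 2 : ℂ) * conj γ * Z.2.1,
              (Real.sqrt 2 : ℂ) * γ * Z.1 - (Real.sqrt 2 : ℂ) * conj γ * Z.2.2,
              (Real.sqrt 2 : ℂ) * γ * Z.2.1))
            (z ^ 2, (Real.sqrt 2 : ℂ) * z * w, w ^ 2)) ∧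
    (∀ Z : ℂ × ℂ × ℂ,
      ((-(Real.sqrt 2 : ℂ) * conj γ * Z.2.1) * conj Z.1
        + ((Real.sqrt 2 : ℂ) * γ * Z.1 - (Real.sqrt 2 : ℂ) * conj γ * Z.2.2) * conj Z.2.1
        + ((Real.sqrt 2 : ℂ) * γ * Z.2.1) * conj Z.2.2).re = 0) := by
  refine ⟨fun z w => ?_, re_skewHermitian_inner_eq_zero (Real.sqrt 2) γ⟩
  have hsqrt : ((Real.sqrt 2 : ℝ) : ℂ) ^ 2 = 2 := by
    exact_mod_cast Real.sq_sqrt zero_le_two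
  rw [fderiv_veronese_apply]
  refine Prod.ext ?_ (Prod.ext ?_ ?_)
  · linear_combination (z * conj γ * w) * hsqrt
  · ring
  · linear_combination (-(w * γ * z)) * hsqrt
end

section
/- Let H : ℂ² → ℂ³ be a holomorphic polynomial map, homogeneous of degree 2, mapping the unit sphere S³ to the unit sphere S⁵, and let X : ℂ² → ℂ³ be holomorphic with homogeneous expansion X = Σ_{k≥0} Xᵏ (Xᵏ homogeneous of degree k). If Re⟨X(z,w), H(z,w)⟩ = 0 for all (z,w) ∈ S³, then for every m ≥ 3 the component X^{m+2} satisfies ⟨X^{m+2}(z,w), H(z,w)⟩ = 0 identically on ℂ², and hence X^{m+2} is orthogonal to H at every point; in particular, if additionally ⟨·, H⟩ is injective on holomorphic homogeneous pieces (as for H(z,w) = (z², √2 zw, w²)), then Xᵏ = 0 for all k ≥ 5. -/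
open ComplexConjugate Complex
open scoped Real

/-
Let `H` be homogeneous of degree `d`, fix `(z, w)` on the sphere and put
`aₖ = ⟨Xᵏ(z, w), H(z, w)⟩`. Rotating the point by `μ = e^{iθ}` turns the hypothesis into:
`conj μ ^ d * Σ aₖ μᵏ` is purely imaginary, i.e. equals minus its conjugate
`Σ conj aₖ μ^(d - k)`. The `(n - d)`-th Fourier coefficient of the left side is `aₙ`, while the
right side has only frequencies `≤ d`; hence `aₙ = 0` for `n > 2d`. As `⟨Xⁿ, H⟩` is homogeneous
of degree `n + d` under real dilations, vanishing on the sphere means vanishing everywhere.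
-/

lemma integral_exp_int_mul_mul_I (r : ℤ) :
    ∫ θ in (0 : ℝ)..2 * π, exp (r * θ * I) = if r = 0 then (2 * π : ℂ) else 0 := by
  split_ifs with hr
  · simp [hr]
  · have hc : (r : ℂ) * I ≠ 0 := by simp [hr, I_ne_zero]
    simp_rw [mul_right_comm _ _ I]
    have h2π : (r : ℂ) * I * (2 * π : ℝ) = r * (2 * π * I) := by push_cast; ring
    rw [integral_exp_mul_complex hc, h2π, exp_int_mul_two_pi_mul_I]
    simp

lemma integral_tsum_mul_exp_int_mul_mul_I (b : ℕ → ℂ) (hb : Summable (‖b ·‖)) (c : ℕ → ℤ) :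
    ∫ θ in (0 : ℝ)..2 * π, ∑' k, b k * exp (c k * θ * I)
      = 2 * π * ∑' k, if c k = 0 then b k else 0 := by
  let f : ℕ → C(ℝ, ℂ) := fun k => ⟨fun θ => b k * exp (c k * θ * I), by fun_prop⟩
  have hf : Summable fun k => ‖(f k).restrict
      (⟨Set.uIcc 0 (2 * π), isCompact_uIcc⟩ : TopologicalSpace.Compacts ℝ)‖ := by
    refine hb.of_nonneg_of_le (fun _ => norm_nonneg _) fun k => ?_
    refine (ContinuousMap.norm_le _ (norm_nonneg _)).2 fun θ => ?_
    have : (c k : ℂ) * θ * I = ((c k * θ : ℝ) : ℂ) * I := by push_cast; ring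
    simp [f, this, norm_exp_ofReal_mul_I]
  refine (intervalIntegral.hasSum_intervalIntegral_of_summable_norm hf).tsum_eq.symm.trans ?_
  rw [← tsum_mul_left]
  congr 1 with k
  simp only [f, ContinuousMap.coe_mk, intervalIntegral.integral_const_mul,
    integral_exp_int_mul_mul_I]
  split_ifs <;> ring

lemma coeff_eq_zero_of_re_conj_pow_mul_tsum_eq_zero (a : ℕ → ℂ) (ha : Summable (‖a ·‖))
    {d n : ℕ} (hn : 2 * d < n)
    (h : ∀ μ : ℂ, ‖μ‖ = 1 → (conj μ ^ d * ∑' k, a k * μ ^ k).re = 0) : a n = 0 := by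
  have hseries : ∀ θ : ℝ, ∑' k, a k * exp ((k - n : ℤ) * θ * I)
      = ∑' k, -conj (a k) * exp ((2 * d - n - k : ℤ) * θ * I) := by
    intro θ
    have hpow : ∀ m : ℕ, exp (θ * I) ^ m = exp (m * θ * I) := fun m => by
      rw [← exp_nat_mul, mul_assoc]
    have hconj_pow : ∀ m : ℕ, conj (exp (θ * I)) ^ m = exp (-m * θ * I) := fun m => by
      rw [← exp_conj, map_mul, conj_ofReal, conj_I, ← exp_nat_mul]
      ring_nf
    set S := conj (exp (θ * I)) ^ d * ∑' k, a k * exp (θ * I) ^ k with hS_def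
    have hS : S + conj S = 0 := by
      rw [add_conj, h _ (norm_exp_ofReal_mul_I θ)]; simp
    have hleft : ∑' k, a k * exp ((k - n : ℤ) * θ * I) = exp ((d - n : ℤ) * θ * I) * S := by
      rw [hS_def, ← mul_assoc, ← tsum_mul_left]
      congr 1 with k
      rw [hpow, hconj_pow, mul_left_comm _ (a k), ← exp_add, ← exp_add]
      congr 2
      push_cast
      ring
    have hright : ∑' k, -conj (a k) * exp ((2 * d - n - k : ℤ) * θ * I)
        = -(exp ((d - n : ℤ) * θ * I) * conj S) := by
      rw [hS_def, map_mul, conj_tsum, map_pow, conj_conj, ← mul_assoc, ← tsum_mul_left,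
        ← tsum_neg]
      congr 1 with k
      rw [map_mul, map_pow, hconj_pow, hpow, neg_mul, mul_left_comm _ (conj (a k)), ← exp_add,
        ← exp_add]
      congr 3
      push_cast
      ring
    rw [hleft, hright, eq_neg_iff_add_eq_zero, ← mul_add, hS, mul_zero]
  have hint := congrArg (fun g : ℝ → ℂ => ∫ θ in (0 : ℝ)..2 * π, g θ) (funext hseries)
  simp only [integral_tsum_mul_exp_int_mul_mul_I _ ha,
    integral_tsum_mul_exp_int_mul_mul_I (fun k => -conj (a k)) (by simpa using ha)] at hint
  have hne : ∀ k : ℕ, (2 * d - n - k : ℤ) ≠ 0 := fun k => by omega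
  simpa [sub_eq_zero, hne, Real.pi_ne_zero] using hint

def IsHomogeneousOfDegree {E : Type*} [SMul ℂ E] (F : ℂ → ℂ → E) (k : ℕ) : Prop :=
  ∀ lam z w : ℂ, F (lam * z) (lam * w) = lam ^ k • F z w

lemma eq_zero_of_eq_zero_on_sphere {f : ℂ → ℂ → ℂ} {p : ℕ} (hp : p ≠ 0)
    (hf : ∀ (s : ℝ) (z w : ℂ), f (s * z) (s * w) = (s : ℂ) ^ p * f z w)
    (hsph : ∀ z w : ℂ, ‖z‖ ^ 2 + ‖w‖ ^ 2 = 1 → f z w = 0) (z w : ℂ) : f z w = 0 := by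
  obtain h0 | hpos := (by positivity : 0 ≤ ‖z‖ ^ 2 + ‖w‖ ^ 2).eq_or_lt
  · obtain ⟨rfl, rfl⟩ : z = 0 ∧ w = 0 := by
      simpa using (add_eq_zero_iff_of_nonneg (sq_nonneg _) (sq_nonneg _)).1 h0.symm
    simpa [hp] using hf 0 0 0
  · set s := √(‖z‖ ^ 2 + ‖w‖ ^ 2)
    have hs : 0 < s := Real.sqrt_pos.2 hpos
    have hunit : ‖z / s‖ ^ 2 + ‖w / s‖ ^ 2 = 1 := by
      rw [norm_div, norm_div, Complex.norm_real, Real.norm_of_nonneg hs.le, div_pow, div_pow,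
        ← add_div, Real.sq_sqrt hpos.le, div_self hpos.ne']
    have hs' : (s : ℂ) ≠ 0 := by exact_mod_cast hs.ne'
    simpa [mul_div_cancel₀ _ hs', hsph _ _ hunit] using hf s (z / s) (w / s)

section HomogeneousExpansion

variable {ι : Type*} [Fintype ι] {H X : ℂ → ℂ → ι → ℂ} {Xc : ℕ → ℂ → ℂ → ι → ℂ} {d : ℕ}

lemma sum_mul_conj_of_isHomogeneousOfDegree (hH : IsHomogeneousOfDegree H d) (v : ι → ℂ)
    (lam z w : ℂ) :
    ∑ j, v j * conj (H (lam * z) (lam * w) j) = conj lam ^ d * ∑ j, v j * conj (H z w j) := by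
  simp only [hH lam z w, Pi.smul_apply, smul_eq_mul, map_mul, map_pow, Finset.mul_sum]
  exact Finset.sum_congr rfl fun j _ => by ring

lemma hasSum_sum_mul_pow_of_isHomogeneousOfDegree (hXc : ∀ k, IsHomogeneousOfDegree (Xc k) k)
    (hXsum : ∀ z w, HasSum (fun k => Xc k z w) (X z w)) (h : ι → ℂ) (μ z w : ℂ) :
    HasSum (fun k => (∑ j, Xc k z w j * h j) * μ ^ k) (∑ j, X (μ * z) (μ * w) j * h j) := by
  have hj : ∀ j, HasSum (fun k => Xc k (μ * z) (μ * w) j * h j) (X (μ * z) (μ * w) j * h j) :=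
    fun j => (Pi.hasSum.mp (hXsum (μ * z) (μ * w)) j).mul_right _
  convert hasSum_sum fun j (_ : j ∈ Finset.univ) => hj j using 2 with k
  simp only [hXc k μ z w, Pi.smul_apply, smul_eq_mul, Finset.sum_mul]
  exact Finset.sum_congr rfl fun j _ => by ring

lemma sum_mul_conj_eq_zero_on_sphere_of_re_eq_zero (hH : IsHomogeneousOfDegree H d)
    (hXc : ∀ k, IsHomogeneousOfDegree (Xc k) k) (hXsum : ∀ z w, HasSum (fun k => Xc k z w) (X z w))
    (hre : ∀ z w : ℂ, ‖z‖ ^ 2 + ‖w‖ ^ 2 = 1 → (∑ j, X z w j * conj (H z w j)).re = 0)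
    {n : ℕ} (hn : 2 * d < n) {z w : ℂ} (hzw : ‖z‖ ^ 2 + ‖w‖ ^ 2 = 1) :
    ∑ j, Xc n z w j * conj (H z w j) = 0 := by
  have hseries := hasSum_sum_mul_pow_of_isHomogeneousOfDegree hXc hXsum (conj <| H z w ·)
  refine coeff_eq_zero_of_re_conj_pow_mul_tsum_eq_zero
    (fun k => ∑ j, Xc k z w j * conj (H z w j)) ?_ hn fun μ hμ => ?_
  · -- in finite dimension unconditional summability is absolute
    exact summable_norm_iff.2 (by simpa using (hseries 1 z w).summable)
  · rw [(hseries μ z w).tsum_eq, ← sum_mul_conj_of_isHomogeneousOfDegree hH]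
    exact hre _ _ (by simpa [norm_mul, hμ] using hzw)

lemma sum_mul_conj_eq_zero_of_re_eq_zero (hH : IsHomogeneousOfDegree H d)
    (hXc : ∀ k, IsHomogeneousOfDegree (Xc k) k) (hXsum : ∀ z w, HasSum (fun k => Xc k z w) (X z w))
    (hre : ∀ z w : ℂ, ‖z‖ ^ 2 + ‖w‖ ^ 2 = 1 → (∑ j, X z w j * conj (H z w j)).re = 0)
    {n : ℕ} (hn : 2 * d < n) (z w : ℂ) : ∑ j, Xc n z w j * conj (H z w j) = 0 := by
  refine eq_zero_of_eq_zero_on_sphere (p := n + d) (by omega) (fun s z w => ?_)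
    (fun z w => sum_mul_conj_eq_zero_on_sphere_of_re_eq_zero hH hXc hXsum hre hn) z w
  simp only [sum_mul_conj_of_isHomogeneousOfDegree hH, hXc n s z w, Pi.smul_apply, smul_eq_mul,
    conj_ofReal, Finset.mul_sum]
  exact Finset.sum_congr rfl fun j _ => by ring

end HomogeneousExpansion

theorem stmt_19_general (H : ℂ → ℂ → Fin 3 → ℂ)
    (hHhom : ∀ (lam z w : ℂ), H (lam * z) (lam * w) = lam ^ 2 • H z w)
    (X : ℂ → ℂ → Fin 3 → ℂ) (Xc : ℕ → ℂ → ℂ → Fin 3 → ℂ)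
    (hXcdiff : ∀ k, Differentiable ℂ fun p : ℂ × ℂ => Xc k p.1 p.2)
    (hXchom : ∀ (k : ℕ) (lam z w : ℂ), Xc k (lam * z) (lam * w) = lam ^ k • Xc k z w)
    (hXsum : ∀ z w : ℂ, HasSum (fun k => Xc k z w) (X z w))
    (hinf : ∀ z w : ℂ, ‖z‖ ^ 2 + ‖w‖ ^ 2 = 1 →
      (∑ j, X z w j * conj (H z w j)).re = 0) :
    (∀ m : ℕ, 3 ≤ m → ∀ z w : ℂ, ∑ j, Xc (m + 2) z w j * conj (H z w j) = 0) ∧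
    ((∀ (k : ℕ) (Y : ℂ → ℂ → Fin 3 → ℂ),
        (Differentiable ℂ fun p : ℂ × ℂ => Y p.1 p.2) →
        (∀ lam z w : ℂ, Y (lam * z) (lam * w) = lam ^ k • Y z w) →
        (∀ z w : ℂ, ∑ j, Y z w j * conj (H z w j) = 0) →
        ∀ z w : ℂ, Y z w = 0) →
      ∀ k : ℕ, 5 ≤ k → ∀ z w : ℂ, Xc k z w = 0) := by
  have hpairing : ∀ n, 2 * 2 < n → ∀ z w, ∑ j, Xc n z w j * conj (H z w j) = 0 :=
    fun n hn => sum_mul_conj_eq_zero_of_re_eq_zero hHhom hXchom hXsum hinf hn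
  exact ⟨fun m hm => hpairing (m + 2) (by omega), fun hinj k hk =>
    hinj k (Xc k) (hXcdiff k) (hXchom k) (hpairing k (by omega))⟩

/-- Fourier-coefficient argument for homogeneous expansions: if `H : ℂ² → ℂ³`
is a holomorphic homogeneous polynomial map of degree `2` sending `S³` into
`S⁵`, and `X = Σ_k Xᵏ` is holomorphic with homogeneous pieces `Xᵏ` of degree
`k` and `Re⟨X, H⟩ = 0` on `S³`, then `⟨X^{m+2}, H⟩ ≡ 0` on `ℂ²` for every
`m ≥ 3`; and if moreover pairing with `H` is injective on holomorphic
homogeneous pieces, then `Xᵏ = 0` for all `k ≥ 5`. -/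
theorem stmt_19 (H : ℂ → ℂ → Fin 3 → ℂ)
    (hHdiff : Differentiable ℂ fun p : ℂ × ℂ => H p.1 p.2)
    (hHhom : ∀ (lam z w : ℂ), H (lam * z) (lam * w) = lam ^ 2 • H z w)
    (hHsph : ∀ z w : ℂ, ‖z‖ ^ 2 + ‖w‖ ^ 2 = 1 →
      ∑ j, ‖H z w j‖ ^ 2 = 1)
    (X : ℂ → ℂ → Fin 3 → ℂ) (Xc : ℕ → ℂ → ℂ → Fin 3 → ℂ)
    (hXcdiff : ∀ k, Differentiable ℂ fun p : ℂ × ℂ => Xc k p.1 p.2)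
    (hXchom : ∀ (k : ℕ) (lam z w : ℂ), Xc k (lam * z) (lam * w) = lam ^ k • Xc k z w)
    (hXsum : ∀ z w : ℂ, HasSum (fun k => Xc k z w) (X z w))
    (hinf : ∀ z w : ℂ, ‖z‖ ^ 2 + ‖w‖ ^ 2 = 1 →
      (∑ j, X z w j * conj (H z w j)).re = 0) :
    (∀ m : ℕ, 3 ≤ m → ∀ z w : ℂ, ∑ j, Xc (m + 2) z w j * conj (H z w j) = 0) ∧
    ((∀ (k : ℕ) (Y : ℂ → ℂ → Fin 3 → ℂ),
        (Differentiable ℂ fun p : ℂ × ℂ => Y p.1 p.2) →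
        (∀ lam z w : ℂ, Y (lam * z) (lam * w) = lam ^ k • Y z w) →
        (∀ z w : ℂ, ∑ j, Y z w j * conj (H z w j) = 0) →
        ∀ z w : ℂ, Y z w = 0) →
      ∀ k : ℕ, 5 ≤ k → ∀ z w : ℂ, Xc k z w = 0) :=
  stmt_19_general H hHhom X Xc hXcdiff hXchom hXsum hinf
end
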